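/- For the Gaussian AR(p) model with feature length l ≥ p, the L-conditional entropy given both a fresh and a stale feature equals the L-conditional entropy given the fresh feature alone: for all integers t ≥ p and μ, ν ≥ 0 with t − μ − ν − l + 1 ≥ 0, H_L(Y_t | (X^l_{t−μ}, X^l_{t−μ−ν})) = H_L(Y_t | X^l_{t−μ}), where H_L(Y | W) is the infimum of E[L(Y, φ(W))] over Borel-measurable estimators φ. -/

import Mathlib

/-!
Given the fresh feature `X^l_{t−μ}`, the target `Y_t` is a measurable function of it and of the
future noise `(W_{t−μ+1}, …, W_t, N_t)`: `l ≥ p` consecutive values of an AR(p) process and the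
later innovations determine all later values. The future noise is independent of everything up
to time `t − μ`, in particular of both features. For a target of this form, the optimal risk
given any feature that determines the fresh one is the expected pointwise minimum of the
conditional risk at the fresh feature, so the stale feature cannot lower it.
-/

open MeasureTheory ProbabilityTheory

/-- Index type for the mutually independent ingredients of the AR(p) model: one index for
the initial vector `(X_0, …, X_{p−1})`, one copy of `ℕ` for the noises `(W_t)_{t ≥ p}`
(index `s` corresponding to `W_{p+s}`), and one copy of `ℕ` for the noises `(N_t)_{t ≥ 0}`. -/
abbrev ARIndex : Type := Unit ⊕ ℕ ⊕ ℕ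

/-- The state space of each ingredient of the AR(p) model. -/
def ARType (p : ℕ) : ARIndex → Type
  | Sum.inl _ => Fin p → ℝ
  | Sum.inr _ => ℝ

/-- Measurable-space structure on each state space. -/
def ARMeasSpace (p : ℕ) : ∀ i, MeasurableSpace (ARType p i) := fun i =>
  match i with
  | Sum.inl _ => inferInstanceAs (MeasurableSpace (Fin p → ℝ))
  | Sum.inr _ => inferInstanceAs (MeasurableSpace ℝ)

/-- The family consisting of the initial vector `(X_0, …, X_{p−1})`, the innovations
`(W_t)_{t ≥ p}` and the observation noises `(N_t)_{t ≥ 0}`. -/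
def ARFamily {Ω : Type*} (p : ℕ) (X W N : ℕ → Ω → ℝ) : ∀ i : ARIndex, Ω → ARType p i :=
  fun i => match i with
  | Sum.inl _ => fun ω (k : Fin p) => X k ω
  | Sum.inr (Sum.inl s) => W (p + s)
  | Sum.inr (Sum.inr s) => N s

/-- The `L`-conditional entropy `H_L(Y | W)`: the infimum over Borel-measurable estimators
`φ : E → 𝒜` of the expected loss `E[L(Y, φ(W))]`. -/
noncomputable def HL {Ω E 𝒜 : Type*} [MeasurableSpace Ω] [MeasurableSpace E]
    [MeasurableSpace 𝒜] (P : Measure Ω) (L : ℝ × 𝒜 → ℝ) (Y : Ω → ℝ) (W : Ω → E) : ℝ :=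
  ⨅ φ : {φ : E → 𝒜 // Measurable φ}, ∫ ω, L (Y ω, φ.1 (W ω)) ∂P

section

open Set Function TopologicalSpace

variable {Ω α β γ 𝒜 : Type*}

theorem abs_integral_le_of_abs_le [MeasurableSpace Ω] {P : Measure Ω} [IsProbabilityMeasure P]
    {f : Ω → ℝ} {C : ℝ} (hf : ∀ ω, |f ω| ≤ C) : |∫ ω, f ω ∂P| ≤ C := by
  simpa using norm_integral_le_of_norm_le_const (μ := P) (f := f) (ae_of_all _ hf)

theorem abs_ciInf_le [Nonempty 𝒜] {f : 𝒜 → ℝ} {C : ℝ} (hf : ∀ b, |f b| ≤ C) :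
    |⨅ b, f b| ≤ C := by
  have hbdd : BddBelow (range f) := ⟨-C, by rintro _ ⟨b, rfl⟩; exact (abs_le.1 (hf b)).1⟩
  exact abs_le.2 ⟨le_ciInf fun b => (abs_le.1 (hf b)).1,
    (ciInf_le hbdd (Classical.arbitrary 𝒜)).trans (abs_le.1 (hf _)).2⟩

theorem ProbabilityTheory.Indep.indepFun_of_measurable [MeasurableSpace β] [MeasurableSpace γ]
    {m₁ m₂ : MeasurableSpace Ω} {_mΩ : MeasurableSpace Ω} {P : Measure Ω}
    (h : Indep m₁ m₂ P) {V : Ω → β} {Z : Ω → γ} (hV : Measurable[m₁] V)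
    (hZ : Measurable[m₂] Z) : IndepFun V Z P :=
  (IndepFun_iff_Indep V Z P).2 (indep_of_indep_of_le h hV.comap_le hZ.comap_le)

theorem ProbabilityTheory.IndepFun.integral_comp_eq_integral_integral [MeasurableSpace Ω]
    [MeasurableSpace β] [MeasurableSpace γ] {P : Measure Ω} [IsFiniteMeasure P] {V : Ω → β}
    {Z : Ω → γ} (hVZ : IndepFun V Z P) (hV : Measurable V) (hZ : Measurable Z)
    {K : β × γ → ℝ} (hK : StronglyMeasurable K)
    (hKi : Integrable K ((P.map V).prod (P.map Z))) :
    ∫ ω, K (V ω, Z ω) ∂P = ∫ ω, ∫ z, K (V ω, z) ∂P.map Z ∂P := by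
  have hmap := (indepFun_iff_map_prod_eq_prod_map_map hV.aemeasurable hZ.aemeasurable).1 hVZ
  rw [← integral_map (hV.prodMk hZ).aemeasurable hK.aestronglyMeasurable, hmap,
    integral_prod _ hKi,
    integral_map hV.aemeasurable hK.integral_prod_right'.aestronglyMeasurable]

section Selection

variable [TopologicalSpace 𝒜] [SeparableSpace 𝒜] [Nonempty 𝒜]

theorem iInf_eq_iInf_denseSeq {f : 𝒜 → ℝ} (hf : Continuous f) :
    ⨅ b, f b = ⨅ n, f (denseSeq 𝒜 n) := by
  rw [← (denseRange_denseSeq 𝒜).ciInf' hf, iInf_range']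

variable [MeasurableSpace α] [MeasurableSpace 𝒜] {h : α → 𝒜 → ℝ}

theorem measurable_iInf_of_continuous (hm : Measurable (uncurry h))
    (hc : ∀ x, Continuous (h x)) : Measurable fun x => ⨅ b, h x b := by
  simp_rw [iInf_eq_iInf_denseSeq (hc _)]
  exact .iInf fun n => hm.comp (measurable_id.prodMk measurable_const)

theorem exists_measurable_lt_iInf_add (hm : Measurable (uncurry h))
    (hc : ∀ x, Continuous (h x)) {ε : ℝ} (hε : 0 < ε) :
    ∃ ψ : α → 𝒜, Measurable ψ ∧ ∀ x, h x (ψ x) < (⨅ b, h x b) + ε := by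
  classical
  have hex : ∀ x, ∃ n, h x (denseSeq 𝒜 n) < (⨅ b, h x b) + ε := fun x =>
    exists_lt_of_ciInf_lt (by rw [← iInf_eq_iInf_denseSeq (hc x)]; linarith)
  have hfind : Measurable fun x => Nat.find (hex x) :=
    measurable_find hex fun n => measurableSet_lt
      (hm.comp (measurable_id.prodMk measurable_const))
      ((measurable_iInf_of_continuous hm hc).add_const ε)
  exact ⟨_, measurable_from_nat.comp hfind, fun x => Nat.find_spec (hex x)⟩

end Selection

section condRisk

variable [MeasurableSpace γ]

/-- The risk of the action `b` at the feature value `x` when the unobserved part of the target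
`g (x, z)` is drawn from `ν`. -/
noncomputable def condRisk (ν : Measure γ) (L : ℝ × 𝒜 → ℝ) (g : α × γ → ℝ) (x : α) (b : 𝒜) :
    ℝ :=
  ∫ z, L (g (x, z), b) ∂ν

variable {ν : Measure γ} {L : ℝ × 𝒜 → ℝ} {g : α × γ → ℝ}

theorem measurable_condRisk [MeasurableSpace α] [MeasurableSpace 𝒜] [SFinite ν]
    (hL : Measurable L) (hg : Measurable g) : Measurable (uncurry (condRisk ν L g)) := by
  have : Measurable fun q : (α × 𝒜) × γ => L (g (q.1.1, q.2), q.1.2) := by fun_prop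
  exact this.stronglyMeasurable.integral_prod_right'.measurable

theorem abs_condRisk_le [IsProbabilityMeasure ν] {C : ℝ} (hLC : ∀ y b, |L (y, b)| ≤ C)
    (x : α) (b : 𝒜) : |condRisk ν L g x b| ≤ C :=
  abs_integral_le_of_abs_le fun _ => hLC _ b

theorem continuous_condRisk [MeasurableSpace α] [MeasurableSpace 𝒜] [TopologicalSpace 𝒜]
    [FirstCountableTopology 𝒜] [IsFiniteMeasure ν] (hL : Measurable L) (hg : Measurable g)
    {C : ℝ} (hLC : ∀ y b, |L (y, b)| ≤ C) (hLc : ∀ y, Continuous fun b => L (y, b)) (x : α) :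
    Continuous (condRisk ν L g x) :=
  continuous_of_dominated (bound := fun _ => C)
    (fun b => (show Measurable fun z => L (g (x, z), b) by fun_prop).aestronglyMeasurable)
    (fun b => ae_of_all _ fun _ => hLC _ b) (integrable_const C)
    (ae_of_all _ fun z => hLc (g (x, z)))

end condRisk

section HL

variable [MeasurableSpace Ω] [MeasurableSpace α] [MeasurableSpace β] [MeasurableSpace γ]
  [MeasurableSpace 𝒜] [TopologicalSpace 𝒜] [SeparableSpace 𝒜] [FirstCountableTopology 𝒜]
  [Nonempty 𝒜] {P : Measure Ω} [IsProbabilityMeasure P] {L : ℝ × 𝒜 → ℝ} {g : α × γ → ℝ}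
  {C : ℝ}

/-- The optimal estimator from `V` picks, at each feature value `π v`, an action minimising the
conditional risk; a dense sequence of actions makes this choice measurable up to `ε`. -/
theorem HL_eq_integral_iInf_condRisk {V : Ω → β} {π : β → α} {Z : Ω → γ} (hV : Measurable V)
    (hπ : Measurable π) (hZ : Measurable Z) (hVZ : IndepFun V Z P) (hg : Measurable g)
    (hL : Measurable L) (hLC : ∀ y b, |L (y, b)| ≤ C)
    (hLc : ∀ y, Continuous fun b => L (y, b)) :
    HL P L (fun ω => g (π (V ω), Z ω)) V
      = ∫ ω, ⨅ b, condRisk (P.map Z) L g (π (V ω)) b ∂P := by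
  have := Measure.isProbabilityMeasure_map (μ := P) hZ.aemeasurable
  set R := condRisk (P.map Z) L g
  have hRm : Measurable (uncurry R) := measurable_condRisk hL hg
  have hRc : ∀ x, Continuous (R x) := continuous_condRisk hL hg hLC hLc
  have hRC : ∀ x b, |R x b| ≤ C := abs_condRisk_le hLC
  have hIm : Measurable fun x => ⨅ b, R x b := measurable_iInf_of_continuous hRm hRc
  have hIint : Integrable (fun ω => ⨅ b, R (π (V ω)) b) P :=
    .of_bound (hIm.comp (hπ.comp hV)).aestronglyMeasurable C
      (ae_of_all _ fun _ => abs_ciInf_le (hRC _))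
  have hRint : ∀ ψ : β → 𝒜, Measurable ψ → Integrable (fun ω => R (π (V ω)) (ψ (V ω))) P :=
    fun ψ hψ => .of_bound (hRm.comp ((hπ.prodMk hψ).comp hV)).aestronglyMeasurable C
      (ae_of_all _ fun _ => hRC _ _)
  have hrisk : ∀ ψ : β → 𝒜, Measurable ψ →
      ∫ ω, L (g (π (V ω), Z ω), ψ (V ω)) ∂P = ∫ ω, R (π (V ω)) (ψ (V ω)) ∂P := fun ψ hψ =>
    hVZ.integral_comp_eq_integral_integral hV hZ (K := fun q => L (g (π q.1, q.2), ψ q.1))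
      (by fun_prop : Measurable _).stronglyMeasurable
      (.of_bound (by fun_prop : Measurable _).aestronglyMeasurable C
        (ae_of_all _ fun _ => hLC _ _))
  have hbdd : BddBelow (range fun ψ : {ψ : β → 𝒜 // Measurable ψ} =>
      ∫ ω, L (g (π (V ω), Z ω), ψ.1 (V ω)) ∂P) := by
    refine ⟨-C, ?_⟩
    rintro _ ⟨ψ, rfl⟩
    exact (abs_le.1 (abs_integral_le_of_abs_le fun _ => hLC _ _)).1
  have : Nonempty {ψ : β → 𝒜 // Measurable ψ} :=
    ⟨⟨fun _ => Classical.arbitrary 𝒜, measurable_const⟩⟩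
  apply le_antisymm
  · refine le_of_forall_pos_le_add fun ε hε => ?_
    obtain ⟨ψ, hψ, hψε⟩ := exists_measurable_lt_iInf_add hRm hRc hε
    calc HL P L (fun ω => g (π (V ω), Z ω)) V
        ≤ ∫ ω, L (g (π (V ω), Z ω), ψ (π (V ω))) ∂P := ciInf_le hbdd ⟨ψ ∘ π, hψ.comp hπ⟩
      _ = ∫ ω, R (π (V ω)) (ψ (π (V ω))) ∂P := hrisk (ψ ∘ π) (hψ.comp hπ)
      _ ≤ ∫ ω, ((⨅ b, R (π (V ω)) b) + ε) ∂P :=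
        integral_mono (hRint _ (hψ.comp hπ)) (hIint.add (integrable_const ε))
          fun _ => (hψε _).le
      _ = (∫ ω, ⨅ b, R (π (V ω)) b ∂P) + ε := by
        rw [integral_add hIint (integrable_const ε)]; simp
  · refine le_ciInf fun ψ => ?_
    rw [hrisk ψ.1 ψ.2]
    exact integral_mono hIint (hRint ψ.1 ψ.2) fun _ =>
      ciInf_le ⟨-C, by rintro _ ⟨b, rfl⟩; exact (abs_le.1 (hRC _ b)).1⟩ _

theorem HL_prod_eq_of_indepFun {F : Ω → α} {S : Ω → β} {Z : Ω → γ} (hF : Measurable F)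
    (hS : Measurable S) (hZ : Measurable Z) (hFSZ : IndepFun (fun ω => (F ω, S ω)) Z P)
    (hg : Measurable g) (hL : Measurable L) (hLC : ∀ y b, |L (y, b)| ≤ C)
    (hLc : ∀ y, Continuous fun b => L (y, b)) :
    HL P L (fun ω => g (F ω, Z ω)) (fun ω => (F ω, S ω))
      = HL P L (fun ω => g (F ω, Z ω)) F :=
  (HL_eq_integral_iInf_condRisk (π := Prod.fst) (hF.prodMk hS) measurable_fst hZ hFSZ hg hL
    hLC hLc).trans (HL_eq_integral_iInf_condRisk (π := id) hF measurable_id hZ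
      (hFSZ.comp measurable_fst measurable_id) hg hL hLC hLc).symm

end HL

section ARRecursion

variable {p : ℕ} (a : Fin p → ℝ) (X W : ℕ → Ω → ℝ)

def IsARSolution : Prop :=
  ∀ t, p ≤ t → ∀ ω, X t ω = (∑ k : Fin p, a k * X (t - ((k : ℕ) + 1)) ω) + W t ω

variable {a X W}

theorem IsARSolution.measurable_of_window {m : MeasurableSpace Ω} (hX : IsARSolution a X W)
    {n T : ℕ} (hwin : ∀ k < p, Measurable[m] (X (n + k)))
    (hW : ∀ s, n + p ≤ s → s ≤ T → Measurable[m] (W s)) :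
    ∀ s, n ≤ s → s ≤ T → Measurable[m] (X s) := by
  intro s
  induction s using Nat.strong_induction_on with
  | _ s ih =>
    intro hns hsT
    by_cases hs : s < n + p
    · obtain ⟨k, rfl⟩ := Nat.exists_eq_add_of_le hns
      exact hwin k (by omega)
    · rw [show X s = _ from funext (hX s (by omega))]
      exact (Finset.measurable_sum _ fun k _ =>
        (ih _ (by omega) (by omega) (by omega)).const_mul _).add (hW s (by omega) hsT)

theorem IsARSolution.exists_obs_eq_comp_window {l : ℕ} (hX : IsARSolution a X W) (hp : 1 ≤ p)
    (hpl : p ≤ l) (N : ℕ → Ω → ℝ) {Xv : ℕ → Ω → Fin l → ℝ}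
    (hXv : ∀ s ω i, Xv s ω i = X (s - (i : ℕ)) ω) {m μ t : ℕ} (hpm : p ≤ m + 1)
    (ht : m + μ = t) :
    ∃ g : (Fin l → ℝ) × (Fin μ → ℝ) × ℝ → ℝ, Measurable g ∧ (fun ω => X t ω + N t ω)
      = fun ω => g (Xv m ω, fun i : Fin μ => W (m + 1 + i) ω, N t ω) := by
  set V : Ω → (Fin l → ℝ) × (Fin μ → ℝ) × ℝ :=
    fun ω => (Xv m ω, fun i : Fin μ => W (m + 1 + i) ω, N t ω)
  have hV : Measurable[MeasurableSpace.comap V inferInstance] V := comap_measurable V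
  have hwin : ∀ k < p, Measurable[MeasurableSpace.comap V inferInstance] (X (m + 1 - p + k)) := by
    intro k hk
    have hXk : X (m + 1 - p + k) = fun ω => (V ω).1 ⟨p - 1 - k, by omega⟩ := by
      funext ω
      simp only [V, hXv]
      congr 1
      omega
    rw [hXk]
    exact (measurable_pi_apply _).comp (measurable_fst.comp hV)
  have hW : ∀ s, m + 1 - p + p ≤ s → s ≤ t →
      Measurable[MeasurableSpace.comap V inferInstance] (W s) := by
    intro s hs hst
    have hWs : W s = fun ω => (V ω).2.1 ⟨s - (m + 1), by omega⟩ := by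
      funext ω
      simp only [V]
      congr 1
      omega
    rw [hWs]
    exact (measurable_pi_apply _).comp (measurable_fst.comp (measurable_snd.comp hV))
  have hXt := hX.measurable_of_window hwin hW t (by omega) le_rfl
  have hNt : Measurable[MeasurableSpace.comap V inferInstance] (N t) :=
    measurable_snd.comp (measurable_snd.comp hV)
  exact (hXt.add hNt).exists_eq_measurable_comp

end ARRecursion

section ARModel

variable {p : ℕ} {X W N : ℕ → Ω → ℝ}

abbrev arSigma (p : ℕ) (X W N : ℕ → Ω → ℝ) (S : Set ARIndex) : MeasurableSpace Ω :=
  ⨆ i ∈ S, (ARMeasSpace p i).comap (ARFamily p X W N i)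

/-- The indices of `(X_0, …, X_{p−1})` and of `W_p, …, W_m`. -/
def arPast (p m : ℕ) : Set ARIndex :=
  insert (Sum.inl ()) ((fun s => Sum.inr (Sum.inl s)) '' Iio (m + 1 - p))

theorem measurable_ARFamily [MeasurableSpace Ω] (hXm : ∀ t, Measurable (X t))
    (hWm : ∀ t, Measurable (W t)) (hNm : ∀ t, Measurable (N t)) :
    ∀ i, Measurable[_, ARMeasSpace p i] (ARFamily p X W N i)
  | Sum.inl _ => measurable_pi_lambda _ fun k => hXm k
  | Sum.inr (Sum.inl _) => hWm _
  | Sum.inr (Sum.inr _) => hNm _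

theorem measurable_ARFamily_arSigma {S : Set ARIndex} {i : ARIndex} (hi : i ∈ S) :
    Measurable[arSigma p X W N S, ARMeasSpace p i] (ARFamily p X W N i) :=
  (comap_measurable _).mono
    (le_iSup₂ (f := fun j _ => (ARMeasSpace p j).comap (ARFamily p X W N j)) i hi) le_rfl

theorem measurable_innov_arSigma {S : Set ARIndex} {s : ℕ} (hs : p ≤ s)
    (h : Sum.inr (Sum.inl (s - p)) ∈ S) : Measurable[arSigma p X W N S] (W s) := by
  have := measurable_ARFamily_arSigma (p := p) (X := X) (W := W) (N := N) h
  rwa [ARFamily, Nat.add_sub_cancel' hs] at this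

theorem IsARSolution.measurable_arSigma_arPast {a : Fin p → ℝ} (hX : IsARSolution a X W)
    {m s : ℕ} (hsm : s ≤ m) : Measurable[arSigma p X W N (arPast p m)] (X s) := by
  refine hX.measurable_of_window (n := 0) (fun k hk => ?_) (fun s hs hsm => ?_) s
    (Nat.zero_le _) hsm
  · rw [zero_add]
    exact (measurable_pi_apply (⟨k, hk⟩ : Fin p)).comp
      (measurable_ARFamily_arSigma (mem_insert (Sum.inl ()) _))
  · exact measurable_innov_arSigma (by omega)
      (mem_insert_of_mem _ ⟨s - p, by simp only [mem_Iio]; omega, rfl⟩)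

theorem IsARSolution.indepFun_features_futureNoise [MeasurableSpace Ω] {P : Measure Ω} {l : ℕ}
    {a : Fin p → ℝ} (hX : IsARSolution a X W) (hXm : ∀ t, Measurable (X t))
    (hWm : ∀ t, Measurable (W t)) (hNm : ∀ t, Measurable (N t))
    (hIndep : iIndepFun (m := ARMeasSpace p) (ARFamily p X W N) P)
    {Xv : ℕ → Ω → Fin l → ℝ} (hXv : ∀ s ω i, Xv s ω i = X (s - (i : ℕ)) ω) {m m' : ℕ}
    (hm' : m' ≤ m) (hpm : p ≤ m + 1) (μ t : ℕ) :
    IndepFun (fun ω => (Xv m ω, Xv m' ω))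
      (fun ω => (fun i : Fin μ => W (m + 1 + i) ω, N t ω)) P := by
  have hind : Indep (arSigma p X W N (arPast p m)) (arSigma p X W N (arPast p m)ᶜ) P :=
    indep_iSup_of_disjoint (fun i => (measurable_ARFamily hXm hWm hNm i).comap_le)
      hIndep disjoint_compl_right
  have hfeat : ∀ s ≤ m, Measurable[arSigma p X W N (arPast p m)] (Xv s) := by
    intro s hs
    refine @measurable_pi_lambda _ _ _ (arSigma p X W N (arPast p m)) _ _ fun i => ?_
    rw [show (fun ω => Xv s ω i) = X (s - i) from funext fun ω => hXv s ω i]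
    exact hX.measurable_arSigma_arPast (by omega)
  have hnoise : Measurable[arSigma p X W N (arPast p m)ᶜ]
      (fun ω => (fun i : Fin μ => W (m + 1 + i) ω, N t ω)) := by
    refine .prodMk (@measurable_pi_lambda _ _ _ (arSigma p X W N (arPast p m)ᶜ) _ _ fun i =>
        measurable_innov_arSigma (by omega) ?_)
      (measurable_ARFamily_arSigma (i := Sum.inr (Sum.inr t)) ?_)
    all_goals simp [arPast]
    omega
  exact hind.indepFun_of_measurable ((hfeat m le_rfl).prodMk (hfeat m' hm')) hnoise

end ARModel

end

theorem ar_HL_stale_redundant_of_long_feature_general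
    {Ω 𝒜 : Type*} [MeasurableSpace Ω]
    [MetricSpace 𝒜] [CompactSpace 𝒜] [Nonempty 𝒜] [MeasurableSpace 𝒜]
    (P : Measure Ω) [IsProbabilityMeasure P]
    (p l : ℕ) (hp : 1 ≤ p) (hpl : p ≤ l)
    (a : Fin p → ℝ)
    (X W N Y : ℕ → Ω → ℝ)
    (hXm : ∀ t, Measurable (X t)) (hWm : ∀ t, Measurable (W t))
    (hNm : ∀ t, Measurable (N t))
    (hIndep : iIndepFun (m := ARMeasSpace p) (ARFamily p X W N) P)
    (hXrec : ∀ t, p ≤ t → ∀ ω, X t ω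
      = (∑ k : Fin p, a k * X (t - ((k : ℕ) + 1)) ω) + W t ω)
    (hYdef : ∀ t ω, Y t ω = X t ω + N t ω)
    (Xv : ℕ → Ω → Fin l → ℝ) (hXv : ∀ s ω i, Xv s ω i = X (s - (i : ℕ)) ω)
    (hXvm : ∀ s, Measurable (Xv s))
    (L : ℝ × 𝒜 → ℝ) (hLmeas : Measurable L)
    (hLbdd : ∃ C : ℝ, ∀ y b, |L (y, b)| ≤ C)
    (hLcont : ∀ y : ℝ, Continuous fun b => L (y, b)) :
    ∀ t μ ν : ℕ, p ≤ t → μ + ν + l ≤ t + 1 →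
      HL P L (Y t) (fun ω => (Xv (t - μ) ω, Xv (t - μ - ν) ω))
        = HL P L (Y t) (Xv (t - μ)) := by
  obtain ⟨C, hC⟩ := hLbdd
  intro t μ ν hpt hle
  have hpm : p ≤ t - μ + 1 := by omega
  obtain ⟨g, hg, hYg⟩ := IsARSolution.exists_obs_eq_comp_window hXrec hp hpl N hXv hpm
    (show t - μ + μ = t by omega)
  have hindep := IsARSolution.indepFun_features_futureNoise hXrec hXm hWm hNm hIndep hXv
    (Nat.sub_le (t - μ) ν) hpm μ t
  rw [show Y t = _ from funext (hYdef t), hYg]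
  exact HL_prod_eq_of_indepFun (hXvm _) (hXvm _) (by fun_prop) hindep hg hLmeas hC hLcont

/-- For the Gaussian AR(p) model with feature length `l ≥ p`, the
`L`-conditional entropy given both a fresh and a stale feature equals the `L`-conditional
entropy given the fresh feature alone: for all `t ≥ p` and `μ, ν ≥ 0` with
`μ + ν + l ≤ t + 1`, `H_L(Y_t | (X^l_{t−μ}, X^l_{t−μ−ν})) = H_L(Y_t | X^l_{t−μ})`. -/
theorem ar_HL_stale_redundant_of_long_feature
    {Ω 𝒜 : Type*} [MeasurableSpace Ω]
    [MetricSpace 𝒜] [CompactSpace 𝒜] [Nonempty 𝒜] [MeasurableSpace 𝒜] [BorelSpace 𝒜]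
    (P : Measure Ω) [IsProbabilityMeasure P]
    (p l : ℕ) (hp : 1 ≤ p) (hpl : p ≤ l)
    (a : Fin p → ℝ) (σW σN : NNReal) (hσW : 0 < σW) (hσN : 0 < σN)
    (X W N Y : ℕ → Ω → ℝ)
    (hXm : ∀ t, Measurable (X t)) (hWm : ∀ t, Measurable (W t))
    (hNm : ∀ t, Measurable (N t))
    (hW : ∀ t, p ≤ t → P.map (W t) = gaussianReal 0 σW)
    (hN : ∀ t, P.map (N t) = gaussianReal 0 σN)
    (hIndep : iIndepFun (m := ARMeasSpace p) (ARFamily p X W N) P)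
    (hXrec : ∀ t, p ≤ t → ∀ ω, X t ω
      = (∑ k : Fin p, a k * X (t - ((k : ℕ) + 1)) ω) + W t ω)
    (hYdef : ∀ t ω, Y t ω = X t ω + N t ω)
    (Xv : ℕ → Ω → Fin l → ℝ) (hXv : ∀ s ω i, Xv s ω i = X (s - (i : ℕ)) ω)
    (hXvm : ∀ s, Measurable (Xv s))
    (L : ℝ × 𝒜 → ℝ) (hLmeas : Measurable L)
    (hLbdd : ∃ C : ℝ, ∀ y b, |L (y, b)| ≤ C)
    (hLcont : ∀ y : ℝ, Continuous fun b => L (y, b)) :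
    ∀ t μ ν : ℕ, p ≤ t → μ + ν + l ≤ t + 1 →
      HL P L (Y t) (fun ω => (Xv (t - μ) ω, Xv (t - μ - ν) ω))
        = HL P L (Y t) (Xv (t - μ)) :=
  ar_HL_stale_redundant_of_long_feature_general P p l hp hpl a X W N Y hXm hWm hNm hIndep hXrec
    hYdef Xv hXv hXvm L hLmeas hLbdd hLcont
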